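/- Let V be a purely even restricted vertex algebra with structures as above. Then the invariance defect of the pairing is: ⟨[x,y],z⟩ + ⟨y,[x,z]⟩ = π(x)(⟨y,z⟩) - (1/2)π(y)(⟨x,z⟩) - (1/2)π(z)(⟨x,y⟩) for all x, y, z ∈ V₁. -/
import Mathlib


open scoped BigOperators

/-- The generalized binomial coefficient `C(m, j)` for `m ∈ ℤ`, as a complex number. -/
noncomputable def binom (m : ℤ) (j : ℕ) : ℂ :=
  (∏ i ∈ Finset.range j, ((m : ℂ) - (i : ℂ))) / (Nat.factorial j : ℂ)


lemma binom_zero (m : ℤ) : binom m 0 = 1 := by simp [binom]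

lemma binom_eq_zero {m : ℤ} {j : ℕ} (h0 : 0 ≤ m) (h : m < j) : binom m j = 0 := by
  have hmem : m.toNat ∈ Finset.range j := by
    simp only [Finset.mem_range]; omega
  have : (∏ i ∈ Finset.range j, ((m : ℂ) - (i : ℂ))) = 0 := by
    apply Finset.prod_eq_zero hmem
    rw [sub_eq_zero]
    norm_cast
    omega
  simp [binom, this]

lemma finsum_nat_zero {M : Type*} [AddCommMonoid M] (f : ℕ → M)
    (h : ∀ j : ℕ, j ≠ 0 → f j = 0) : ∑ᶠ j : ℕ, f j = f 0 :=
  finsum_eq_single f 0 h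

/-- A purely even restricted graded vertex algebra: a vertex algebra (vacuum, Fourier modes
`coeff a n = a_{(n)}`, translation operator `T = ∂`, vacuum axiom, translation invariance and
the Borcherds identity) together with a grading by conformal weights `wt : ℤ → Submodule ℂ V`
(the eigenspace decomposition of the Hamiltonian `H`), with no negative conformal weights,
`vac` of weight `0`, and such that `a_{(n)} : V_Δ ⊗ V_{Δ'} → V_{Δ+Δ'-n-1}`. -/
structure RestrictedVA (V : Type*) [AddCommGroup V] [Module ℂ V] where
  vac : V
  coeff : V → ℤ → Module.End ℂ V
  T : Module.End ℂ V
  wt : ℤ → Submodule ℂ V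
  coeff_add : ∀ (a b : V) (n : ℤ), coeff (a + b) n = coeff a n + coeff b n
  coeff_smul : ∀ (c : ℂ) (a : V) (n : ℤ), coeff (c • a) n = c • coeff a n
  truncation : ∀ a b : V, ∃ N : ℤ, ∀ n ≥ N, coeff a n b = 0
  vac_field : ∀ n : ℤ, coeff vac n = if n = -1 then (1 : Module.End ℂ V) else 0
  T_vac : T vac = 0
  creation_nonneg : ∀ (a : V) (n : ℤ), 0 ≤ n → coeff a n vac = 0
  creation_neg_one : ∀ a : V, coeff a (-1) vac = a
  translation : ∀ (a : V) (n : ℤ),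
    T * coeff a n - coeff a n * T = ((-n : ℤ) : ℂ) • coeff a (n - 1)
  borcherds : ∀ (a b c : V) (m n k : ℤ),
    (∑ᶠ j : ℕ, binom m j • coeff (coeff a (n + j) b) (m + k - j) c) =
      (∑ᶠ j : ℕ, ((-1 : ℂ) ^ j * binom n j) • coeff a (n + m - j) (coeff b (k + j) c)) -
      (∑ᶠ j : ℕ, ((-1 : ℂ) ^ ((j : ℤ) + n) * binom n j) •
        coeff b (n + k - j) (coeff a (m + j) c))
  wt_neg : ∀ d : ℤ, d < 0 → wt d = ⊥
  vac_wt : vac ∈ wt 0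
  wt_indep : ∀ d : ℤ, Disjoint (wt d) (⨆ (e : ℤ) (_ : e ≠ d), wt e)
  wt_top : (⨆ d : ℤ, wt d) = ⊤
  wt_coeff : ∀ {a b : V} {d e : ℤ} (n : ℤ),
    a ∈ wt d → b ∈ wt e → coeff a n b ∈ wt (d + e - n - 1)

/-- The subspace `Ω ⊆ V₁` spanned by the elements `a ∂b` with `a, b ∈ A = V₀`
(the product being `a_{(-1)}`). -/
def RestrictedVA.Omega {V : Type*} [AddCommGroup V] [Module ℂ V] (W : RestrictedVA V) :
    Submodule ℂ V :=
  Submodule.span ℂ {x | ∃ a b : V, a ∈ W.wt 0 ∧ b ∈ W.wt 0 ∧ x = W.coeff a (-1) (W.T b)}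

/-- The bracket `[x,y] = (x_{(0)}y - y_{(0)}x)/2` on `V₁`. -/
noncomputable def RestrictedVA.br {V : Type*} [AddCommGroup V] [Module ℂ V]
    (W : RestrictedVA V) (x y : V) : V :=
  ((2 : ℂ))⁻¹ • (W.coeff x 0 y - W.coeff y 0 x)

/-- The symmetric pairing `⟨x,y⟩ = x_{(1)}y` on `V₁`, with values in `A = V₀`. -/
def RestrictedVA.pr {V : Type*} [AddCommGroup V] [Module ℂ V]
    (W : RestrictedVA V) (x y : V) : V :=
  W.coeff x 1 y


namespace RestrictedVA

variable {V : Type*} [AddCommGroup V] [Module ℂ V] (W : RestrictedVA V)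

lemma coeff_zero_left (n : ℤ) : W.coeff 0 n = 0 := by
  have h := W.coeff_smul 0 0 n
  simpa using h

lemma eq_zero_of_wt_neg {a : V} {d : ℤ} (h : a ∈ W.wt d) (hd : d < 0) : a = 0 := by
  rw [W.wt_neg d hd] at h
  simpa using h

lemma coeff_wt_zero {a b : V} {d e : ℤ} (ha : a ∈ W.wt d) (hb : b ∈ W.wt e)
    (n : ℤ) (h : d + e - n - 1 < 0) : W.coeff a n b = 0 :=
  W.eq_zero_of_wt_neg (W.wt_coeff n ha hb) h

lemma coeff_neg_two_vac (a : V) : W.coeff a (-2) W.vac = W.T a := by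
  have h := congrArg (fun f => f W.vac) (W.translation a (-1))
  simp only [LinearMap.sub_apply, Module.End.mul_apply, LinearMap.smul_apply] at h
  rw [W.creation_neg_one, W.T_vac, map_zero, sub_zero] at h
  norm_num at h
  rw [← h]

/-- B4: commutator formula instance. -/
lemma B4 (a b c : V) : W.coeff (W.coeff a 0 b) 1 c =
    W.coeff a 0 (W.coeff b 1 c) - W.coeff b 1 (W.coeff a 0 c) := by
  have h := W.borcherds a b c 0 0 1
  rw [finsum_nat_zero _ (fun j hj => by
        rw [binom_eq_zero le_rfl (by exact_mod_cast Nat.pos_of_ne_zero hj), zero_smul]),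
      finsum_nat_zero _ (fun j hj => by
        rw [binom_eq_zero le_rfl (by exact_mod_cast Nat.pos_of_ne_zero hj), mul_zero,
          zero_smul]),
      finsum_nat_zero _ (fun j hj => by
        rw [binom_eq_zero le_rfl (by exact_mod_cast Nat.pos_of_ne_zero hj), mul_zero,
          zero_smul])] at h
  norm_num [binom_zero] at h
  exact h

/-- B3: `(Ta)_1 c = -(a_0 c)`. -/
lemma B3 (a c : V) : W.coeff (W.T a) 1 c = - W.coeff a 0 c := by
  have h := W.borcherds a W.vac c 0 (-2) 1
  rw [finsum_nat_zero _ (fun j hj => by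
        rw [binom_eq_zero le_rfl (by exact_mod_cast Nat.pos_of_ne_zero hj), zero_smul]),
      finsum_eq_zero_of_forall_eq_zero (fun j => by
        rw [W.vac_field, if_neg (by omega), LinearMap.zero_apply, map_zero, smul_zero]),
      finsum_nat_zero _ (fun j hj => by
        rw [W.vac_field, if_neg (by omega), LinearMap.zero_apply, smul_zero])] at h
  norm_num [binom_zero, W.vac_field] at h
  rw [W.coeff_neg_two_vac] at h
  rw [h]

/-- B2: quasi-skew-symmetry for low weights. -/
lemma B2 {u v : V} {d e : ℤ} (hu : u ∈ W.wt d) (hv : v ∈ W.wt e) (hde : d + e ≤ 2) :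
    W.coeff u 0 v + W.coeff v 0 u = W.T (W.coeff u 1 v) := by
  have h := W.borcherds u v W.vac (-1) 1 (-1)
  rw [finsum_nat_zero _ (fun j hj => by
        rw [W.coeff_wt_zero hu hv (1 + (j : ℤ)) (by omega), W.coeff_zero_left,
          LinearMap.zero_apply, smul_zero]),
      finsum_nat_zero _ (fun j hj => by
        match j, hj with
        | 1, _ => norm_num [W.creation_nonneg v 0 le_rfl]
        | (k+2), _ =>
          rw [binom_eq_zero (by norm_num) (by exact_mod_cast by omega), mul_zero, zero_smul]),
      finsum_nat_zero _ (fun j hj => by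
        match j, hj with
        | 1, _ => norm_num [W.creation_nonneg u 0 le_rfl]
        | (k+2), _ =>
          rw [binom_eq_zero (by norm_num) (by exact_mod_cast by omega), mul_zero, zero_smul])]
    at h
  norm_num [binom_zero, W.creation_neg_one] at h
  rw [W.coeff_neg_two_vac] at h
  rw [← h]

/-- B5: translation consequence. -/
lemma B5 {y a : V} (h : W.coeff y 1 a = 0) :
    W.coeff y 1 (W.T a) = W.coeff y 0 a := by
  have ht := congrArg (fun f => f a) (W.translation y 1)
  simp only [LinearMap.sub_apply, Module.End.mul_apply, LinearMap.smul_apply] at ht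
  rw [h, map_zero, zero_sub] at ht
  norm_num at ht
  exact ht

lemma coeff_sub_left (a b : V) (n : ℤ) :
    W.coeff (a - b) n = W.coeff a n - W.coeff b n := by
  have h1 := W.coeff_add a (-b) n
  have h2 := W.coeff_smul (-1) b n
  have hb : ((-1 : ℂ) • b) = -b := by module
  rw [hb] at h2
  rw [sub_eq_add_neg, h1, h2]
  module

end RestrictedVA

/-- In a purely even restricted vertex algebra, the invariance defect of the
pairing is `⟨[x,y],z⟩ + ⟨y,[x,z]⟩ = π(x)(⟨y,z⟩) - (1/2)π(y)(⟨x,z⟩) - (1/2)π(z)(⟨x,y⟩)`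
for all `x, y, z ∈ V₁`, where `π(x)(a) = x_{(0)}a`. -/
theorem pairing_invariance_defect {V : Type*} [AddCommGroup V] [Module ℂ V]
    (W : RestrictedVA V) (x y z : V)
    (hx : x ∈ W.wt 1) (hy : y ∈ W.wt 1) (hz : z ∈ W.wt 1) :
    W.pr (W.br x y) z + W.pr y (W.br x z) =
      W.coeff x 0 (W.pr y z) - ((2 : ℂ))⁻¹ • W.coeff y 0 (W.pr x z)
        - ((2 : ℂ))⁻¹ • W.coeff z 0 (W.pr x y) := by
  have hP : W.coeff x 1 y ∈ W.wt 0 := by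
    have h := W.wt_coeff 1 hx hy
    norm_num at h
    exact h
  have hQ : W.coeff x 1 z ∈ W.wt 0 := by
    have h := W.wt_coeff 1 hx hz
    norm_num at h
    exact h
  have h6 : W.coeff (W.coeff x 1 y) 0 z = - W.coeff z 0 (W.coeff x 1 y) := by
    have h := W.B2 hP hz (by norm_num)
    rw [W.coeff_wt_zero hP hz 1 (by norm_num), map_zero] at h
    exact eq_neg_of_add_eq_zero_left h
  have h1 : W.coeff y 0 x = W.T (W.coeff x 1 y) - W.coeff x 0 y :=
    eq_sub_of_add_eq (by rw [add_comm]; exact W.B2 hx hy (by norm_num))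
  have h2 : W.coeff z 0 x = W.T (W.coeff x 1 z) - W.coeff x 0 z :=
    eq_sub_of_add_eq (by rw [add_comm]; exact W.B2 hx hz (by norm_num))
  have hB1 : W.coeff (W.coeff y 0 x) 1 z =
      W.coeff z 0 (W.coeff x 1 y) - W.coeff (W.coeff x 0 y) 1 z := by
    rw [h1, W.coeff_sub_left, LinearMap.sub_apply, W.B3, h6]
    abel
  have hC2 : W.coeff y 1 (W.coeff z 0 x) =
      W.coeff y 0 (W.coeff x 1 z) - W.coeff y 1 (W.coeff x 0 z) := by
    rw [h2, map_sub, W.B5 (W.coeff_wt_zero hy hQ 1 (by norm_num))]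
  have hA1 := W.B4 x y z
  simp only [RestrictedVA.pr, RestrictedVA.br, W.coeff_smul, W.coeff_sub_left,
    LinearMap.smul_apply, LinearMap.sub_apply, map_smul, map_sub]
  rw [hB1, hC2, hA1]
  module
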